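/- Let q ∈ [2,∞) be real, ρ ∈ (0,1), and set λ := ln( μ*·(1+ρ·(1/μ*−1))^q + (1−μ*)·(1−ρ)^q ) / ((q−1)·ln(1/μ*)). For any probability distribution ν on Ω, writing ν T_ρ := ρ·ν + (1−ρ)·μ, it holds that D_q(ν T_ρ ‖ μ) ≤ λ · D_q(ν ‖ μ), with equality if and only if ν = μ or ν is the point mass at some x* with μ(x*) = μ*. -/

import Mathlib

/-!
Write `f = ν / μ`, so that `E_μ f = 1` and `X := exp D_q(ν‖μ)` satisfies `E_μ f^q = X^(q-1)`,
and let `φ a = ((ρ a + 1 - ρ)^q - (1 - ρ)^q) / a` (this is `powSlope q ρ (1 - ρ)`). For `q ≥ 2`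
the function `c ↦ φ (c^(1/(q-1)))` is concave, so Jensen's inequality with weights `μ f` at the
points `f^(q-1)` gives `E_μ (ρ f + 1 - ρ)^q ≤ (1 - ρ)^q + φ X`, i.e.
`(q-1) D_q(ν T_ρ‖μ) ≤ Φ (D_q(ν‖μ))` with `Φ u = log ((1 - ρ)^q + φ (e^u))` (`mixProfile q ρ`).
The function `Φ` is strictly convex with `Φ 0 = 0`, and `D_q(ν‖μ)` lies in `[0, log (1/μ*)]`, so
`Φ` stays below its chord over that interval, whose slope is `(q-1) λ`. Equality forces
`D_q(ν‖μ)` to an endpoint: `0` (then `ν = μ`) or `log (1/μ*)` (then `ν` is a point mass at an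
atom of mass `μ*`).
-/

open Finset

open scoped Classical

/-- Rényi divergence of order `q` between mass functions `ν` and `μ` on a finite set:
`D_q(ν‖μ) = (1/(q-1)) ln Σ_x ν(x)^q / μ(x)^{q-1}`. -/
noncomputable def renyiDiv {Ω : Type*} [Fintype Ω] (q : ℝ) (ν μ : Ω → ℝ) : ℝ :=
  (1 / (q - 1)) * Real.log (∑ x, ν x ^ q / μ x ^ (q - 1))

open Real Set

theorem rpow_add_mul_rpow_sub_one_mul_sub_le {x y p : ℝ} (hx : 0 < x) (hy : 0 ≤ y) (hp : 1 ≤ p) :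
    x ^ p + p * x ^ (p - 1) * (y - x) ≤ y ^ p := by
  have h := one_add_mul_self_le_rpow_one_add (s := y / x - 1) (by linarith [div_nonneg hy hx.le]) hp
  rw [add_sub_cancel, div_rpow hy hx.le, le_div_iff₀ (rpow_pos_of_pos hx p)] at h
  calc x ^ p + p * x ^ (p - 1) * (y - x) = (1 + p * (y / x - 1)) * x ^ p := by
        rw [rpow_sub_one hx.ne']; field_simp
    _ ≤ y ^ p := h

theorem rpow_add_mul_rpow_sub_one_mul_sub_lt {x y p : ℝ} (hx : 0 < x) (hy : 0 ≤ y) (hxy : x ≠ y)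
    (hp : 1 < p) : x ^ p + p * x ^ (p - 1) * (y - x) < y ^ p := by
  have hs : y / x - 1 ≠ 0 := by
    rw [sub_ne_zero, ne_eq, div_eq_one_iff_eq hx.ne']; exact hxy.symm
  have h := one_add_mul_self_lt_rpow_one_add (by linarith [div_nonneg hy hx.le]) hs hp
  rw [add_sub_cancel, div_rpow hy hx.le, lt_div_iff₀ (rpow_pos_of_pos hx p)] at h
  calc x ^ p + p * x ^ (p - 1) * (y - x) = (1 + p * (y / x - 1)) * x ^ p := by
        rw [rpow_sub_one hx.ne']; field_simp
    _ < y ^ p := h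

-- The tangent line of `x ↦ x ^ (q - 1)` at `σ`, evaluated at `τ` and multiplied by `τ`.
theorem rpow_sub_rpow_le_of_two_le {σ τ q : ℝ} (hσ : 0 < σ) (hτ : 0 < τ) (hq : 2 ≤ q) :
    σ ^ q - τ ^ q ≤ q * (σ - τ) * σ ^ (q - 1) - (q - 1) * (σ - τ) ^ 2 * σ ^ (q - 2) := by
  have htan := rpow_add_mul_rpow_sub_one_mul_sub_le hσ hτ.le (p := q - 1) (by linarith)
  rw [show q - 1 - 1 = q - 2 by ring] at htan
  have e1 : σ ^ (q - 1) = σ ^ q / σ := rpow_sub_one hσ.ne' q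
  have e2 : σ ^ (q - 2) = σ ^ q / σ ^ 2 := by rw [rpow_sub hσ, rpow_two]
  have e3 : τ ^ q = τ ^ (q - 1) * τ := by rw [rpow_sub_one hτ.ne']; field_simp
  rw [e1, e2] at htan ⊢
  rw [e3]
  have h0 : q * (σ - τ) * (σ ^ q / σ) - (q - 1) * (σ - τ) ^ 2 * (σ ^ q / σ ^ 2) - σ ^ q
      + (σ ^ q / σ + (q - 1) * (σ ^ q / σ ^ 2) * (τ - σ)) * τ = 0 := by
    field_simp; ring
  nlinarith [mul_le_mul_of_nonneg_right htan hτ.le]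

theorem strictConvexOn_univ_log_of_sq_deriv_lt {W W' W'' : ℝ → ℝ} (hW : ∀ u, 0 < W u)
    (hW' : ∀ u, HasDerivAt W (W' u) u) (hW'' : ∀ u, HasDerivAt W' (W'' u) u)
    (h : ∀ u, W' u ^ 2 < W u * W'' u) : StrictConvexOn ℝ univ (fun u => log (W u)) := by
  have hd : ∀ u, HasDerivAt (fun u => log (W u)) (W' u / W u) u :=
    fun u => (hW' u).log (hW u).ne'
  refine StrictMono.strictConvexOn_univ_of_deriv
    (continuous_iff_continuousAt.2 fun u => (hd u).continuousAt) ?_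
  rw [show deriv (fun u => log (W u)) = fun u => W' u / W u from funext fun u => (hd u).deriv]
  refine strictMono_of_deriv_pos fun u => ?_
  have hd2 : HasDerivAt (fun u => W' u / W u) ((W'' u * W u - W' u * W' u) / W u ^ 2) u :=
    (hW'' u).div (hW' u) (hW u).ne'
  rw [hd2.deriv]
  have := h u
  exact div_pos (by nlinarith) (pow_pos (hW u) 2)

theorem add_sq_lt_add_mul_add {P h h' h'' : ℝ} (hP : 0 ≤ P) (hh : 0 < h)
    (hlog : h' ^ 2 < h * h'') : (P + h') ^ 2 < (P + h) * (P + h'') := by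
  have hmid : 2 * h' ≤ h + h'' := by nlinarith [sq_nonneg (h - h')]
  nlinarith [mul_nonneg hP (sub_nonneg.2 hmid)]

theorem StrictConvexOn.lt_div_mul_of_mem_Ioo {f : ℝ → ℝ} {L u : ℝ}
    (hf : StrictConvexOn ℝ (Icc 0 L) f) (hf0 : f 0 = 0) (hu : u ∈ Ioo 0 L) : f u < f L / L * u := by
  have h := hf.secant_strict_mono (left_mem_Icc.2 (hu.1.trans hu.2).le) (Ioo_subset_Icc_self hu)
    (right_mem_Icc.2 (hu.1.trans hu.2).le) hu.1.ne' (hu.1.trans hu.2).ne' hu.2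
  rw [hf0, sub_zero, sub_zero, sub_zero, sub_zero, div_lt_iff₀ hu.1] at h
  exact h

theorem ConvexOn.le_div_mul_of_mem_Icc {f : ℝ → ℝ} {L u : ℝ}
    (hf : ConvexOn ℝ (Icc 0 L) f) (hf0 : f 0 = 0) (hu : u ∈ Icc 0 L) : f u ≤ f L / L * u := by
  rcases hu.1.eq_or_lt with rfl | hu0
  · rw [hf0, mul_zero]
  have h := hf.secant_mono (left_mem_Icc.2 (hu0.le.trans hu.2)) hu
    (right_mem_Icc.2 (hu0.le.trans hu.2)) hu0.ne' (hu0.trans_le hu.2).ne' hu.2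
  rw [hf0, sub_zero, sub_zero, sub_zero, sub_zero, div_le_iff₀ hu0] at h
  exact h

theorem rpow_div_rpow_sub_one_eq_mul_div_rpow {m n q : ℝ} (hm : 0 < m) (hn : 0 ≤ n) :
    n ^ q / m ^ (q - 1) = m * (n / m) ^ q := by
  rw [div_rpow hn hm.le, rpow_sub_one hm.ne']
  field_simp

theorem rpow_div_rpow_sub_one_eq_mul_div_rpow_sub_one {m n q : ℝ} (hm : 0 < m) (hn : 0 < n) :
    n ^ q / m ^ (q - 1) = n * (n / m) ^ (q - 1) := by
  rw [rpow_div_rpow_sub_one_eq_mul_div_rpow hm hn.le, rpow_sub_one (div_pos hn hm).ne']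
  field_simp

theorem rpow_div_rpow_sub_one_le {m n s q : ℝ} (hs : 0 < s) (hsm : s ≤ m) (hn : 0 ≤ n)
    (hn1 : n ≤ 1) (hq : 1 < q) : n ^ q / m ^ (q - 1) ≤ n * (1 / s) ^ (q - 1) := by
  rcases hn.eq_or_lt with rfl | hn
  · rw [zero_rpow (by linarith), zero_div, zero_mul]
  have hm : 0 < m := hs.trans_le hsm
  rw [rpow_div_rpow_sub_one_eq_mul_div_rpow_sub_one hm hn]
  exact mul_le_mul_of_nonneg_left (rpow_le_rpow (div_pos hn hm).le
    (div_le_div₀ zero_le_one hn1 hs hsm) (by linarith)) hn.le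

theorem rpow_div_rpow_sub_one_lt {m n s q : ℝ} (hm : 0 < m) (hn : 0 < n) (hlt : n / m < 1 / s)
    (hq : 1 < q) : n ^ q / m ^ (q - 1) < n * (1 / s) ^ (q - 1) := by
  rw [rpow_div_rpow_sub_one_eq_mul_div_rpow_sub_one hm hn]
  exact mul_lt_mul_of_pos_left (rpow_lt_rpow (div_pos hn hm).le hlt (by linarith)) hn

theorem eq_ite_of_sum_eq_one {Ω : Type*} [Fintype Ω] {ν : Ω → ℝ} (hν : ∀ x, 0 ≤ ν x)
    (hν1 : ∑ x, ν x = 1) {xs : Ω} (hxs : ν xs = 1) (y : Ω) : ν y = if y = xs then 1 else 0 := by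
  split_ifs with hy
  · rw [hy, hxs]
  have hsplit := add_sum_erase univ ν (mem_univ xs)
  have hy' := single_le_sum (fun z _ => hν z) (mem_erase.2 ⟨hy, mem_univ y⟩)
  linarith [hν y]

theorem lt_one_of_two_le_card {Ω : Type*} [Fintype Ω] {μ : Ω → ℝ} (hΩ : 2 ≤ Fintype.card Ω)
    (hμ : ∀ x, 0 < μ x) (hμ1 : ∑ x, μ x = 1) (x : Ω) : μ x < 1 := by
  obtain ⟨y, hy⟩ := Fintype.exists_ne_of_one_lt_card hΩ x
  exact hμ1 ▸ single_lt_sum hy (mem_univ x) (mem_univ y) (hμ y) fun z _ _ => (hμ z).le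

-- With `D = ρ e^u`, this is `h' ^ 2 < h * h''` for `h u = (ρ e^u + τ) ^ q - τ ^ q`.
theorem sq_mul_rpow_sub_one_lt {D τ q : ℝ} (hD : 0 < D) (hτ : 0 < τ) (hq : 1 < q) :
    (D * q * (D + τ) ^ (q - 1)) ^ 2 < ((D + τ) ^ q - τ ^ q)
      * (D * q * (D + τ) ^ (q - 1) + D * q * (D * (q - 1) * (D + τ) ^ (q - 2))) := by
  set σ := D + τ with hσ
  have hσ0 : 0 < σ := by positivity
  have htan := rpow_add_mul_rpow_sub_one_mul_sub_lt hτ hσ0.le (by linarith) hq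
  rw [rpow_sub_one hτ.ne'] at htan
  rw [rpow_sub_one hσ0.ne', rpow_sub hσ0, rpow_two]
  have hS : 0 < σ ^ q := rpow_pos_of_pos hσ0 q
  rw [← sub_pos]
  have key : ((σ ^ q - τ ^ q) * (D * q * (σ ^ q / σ) + D * q * (D * (q - 1) * (σ ^ q / σ ^ 2))))
      - (D * q * (σ ^ q / σ)) ^ 2
      = q * D * τ * σ ^ q / σ ^ 2 * (σ ^ q - (τ ^ q + q * (τ ^ q / τ) * (σ - τ))) := by
    rw [hσ]; field_simp; ring
  rw [key]
  have := sub_pos.2 htan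
  positivity

theorem hasDerivAt_rpow_mul_exp_add {ρ τ r u : ℝ} (hσ : 0 < ρ * exp u + τ) :
    HasDerivAt (fun u => (ρ * exp u + τ) ^ r) (ρ * exp u * r * (ρ * exp u + τ) ^ (r - 1)) u :=
  (((hasDerivAt_exp u).const_mul ρ).add_const τ).rpow_const (Or.inl hσ.ne')

noncomputable def powSlope (q ρ τ a : ℝ) : ℝ := ((ρ * a + τ) ^ q - τ ^ q) / a

section powSlope

variable {q ρ τ : ℝ}

theorem rpow_eq_add_mul_powSlope (q ρ τ a : ℝ) :
    (ρ * a + τ) ^ q = τ ^ q + a * powSlope q ρ τ a := by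
  rcases eq_or_ne a 0 with rfl | ha
  · simp
  · rw [powSlope, mul_div_cancel₀ _ ha]; ring

theorem hasDerivAt_powSlope {a : ℝ} (ha : a ≠ 0) (hσ : 0 < ρ * a + τ) :
    HasDerivAt (powSlope q ρ τ)
      ((a * (q * ρ * (ρ * a + τ) ^ (q - 1)) - ((ρ * a + τ) ^ q - τ ^ q)) / a ^ 2) a := by
  have h := ((((hasDerivAt_id' a).const_mul ρ).add_const τ).rpow_const (p := q)
    (Or.inl hσ.ne')).sub_const (τ ^ q) |>.div (hasDerivAt_id' a) ha
  exact h.congr_deriv (by ring)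

theorem hasDerivAt_bregman_div_rpow {a : ℝ} (ha : 0 < a) (hσ : 0 < ρ * a + τ) :
    HasDerivAt (fun a => (τ ^ q - (ρ * a + τ) ^ q + a * (q * ρ * (ρ * a + τ) ^ (q - 1))) / a ^ q)
      ((a * (q * (q - 1) * ρ ^ 2 * (ρ * a + τ) ^ (q - 2)) * a ^ q
        - (τ ^ q - (ρ * a + τ) ^ q + a * (q * ρ * (ρ * a + τ) ^ (q - 1))) * (q * a ^ (q - 1)))
        / (a ^ q) ^ 2) a := by
  have hlin := ((hasDerivAt_id' a).const_mul ρ).add_const τ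
  have h1 := hlin.rpow_const (p := q) (Or.inl hσ.ne')
  have h2 := (hlin.rpow_const (p := q - 1) (Or.inl hσ.ne')).const_mul (q * ρ)
  have h3 := ((h1.const_sub (τ ^ q)).add ((hasDerivAt_id' a).mul h2)).div
    (hasDerivAt_rpow_const (p := q) (Or.inl ha.ne')) (rpow_pos_of_pos ha q).ne'
  refine h3.congr_deriv ?_
  simp only [Pi.add_apply, Pi.mul_apply]
  rw [show q - 1 - 1 = q - 2 by ring]
  ring

/-- The numerator is the Bregman gap `g 0 - g a - g' a * (0 - a)` of `g a = (ρ * a + τ) ^ q`. -/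
theorem antitoneOn_bregman_div_rpow (hq : 2 ≤ q) (hρ : 0 < ρ) (hτ : 0 < τ) :
    AntitoneOn (fun a => (τ ^ q - (ρ * a + τ) ^ q + a * (q * ρ * (ρ * a + τ) ^ (q - 1))) / a ^ q)
      (Ioi 0) := by
  have hderiv := fun a (ha : a ∈ Ioi (0:ℝ)) =>
    hasDerivAt_bregman_div_rpow (q := q) ha (by have : (0:ℝ) < a := ha; positivity : 0 < ρ * a + τ)
  refine antitoneOn_of_deriv_nonpos (convex_Ioi 0)
    (fun a ha => (hderiv a ha).continuousAt.continuousWithinAt) ?_ ?_ <;> rw [interior_Ioi]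
  · exact fun a ha => (hderiv a ha).differentiableAt.differentiableWithinAt
  intro a (ha : 0 < a)
  rw [(hderiv a ha).deriv]
  refine div_nonpos_of_nonpos_of_nonneg ?_ (sq_nonneg _)
  have hbound := rpow_sub_rpow_le_of_two_le (by positivity : 0 < ρ * a + τ) hτ hq
  rw [show ρ * a + τ - τ = ρ * a by ring] at hbound
  calc _ = q * a ^ (q - 1) * ((q - 1) * (ρ * a) ^ 2 * (ρ * a + τ) ^ (q - 2)
        - (τ ^ q - (ρ * a + τ) ^ q + q * (ρ * a) * (ρ * a + τ) ^ (q - 1))) := by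
        rw [show a ^ q = a ^ (q - 1) * a by rw [rpow_sub_one ha.ne']; field_simp]
        ring
    _ ≤ 0 := mul_nonpos_of_nonneg_of_nonpos (by positivity) (by linarith)

theorem concaveOn_powSlope_comp_rpow (hq : 2 ≤ q) (hρ : 0 < ρ) (hτ : 0 < τ) :
    ConcaveOn ℝ (Ioi 0) (fun c => powSlope q ρ τ (c ^ (q - 1)⁻¹)) := by
  have hq1 : q - 1 ≠ 0 := by linarith
  set p := (q - 1)⁻¹ with hp
  have hp0 : 0 < p := inv_pos.2 (by linarith)
  set K := fun a => (τ ^ q - (ρ * a + τ) ^ q + a * (q * ρ * (ρ * a + τ) ^ (q - 1))) / a ^ q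
  have hderiv : ∀ c ∈ Ioi (0:ℝ),
      HasDerivAt (fun c => powSlope q ρ τ (c ^ p)) (p * K (c ^ p)) c := by
    intro c (hc : 0 < c)
    have ha : 0 < c ^ p := rpow_pos_of_pos hc p
    have h := (hasDerivAt_powSlope (q := q) ha.ne' (by positivity : 0 < ρ * c ^ p + τ)).comp c
      (hasDerivAt_rpow_const (p := p) (Or.inl hc.ne'))
    refine h.congr_deriv ?_
    have hpow : (c ^ p) ^ q = c ^ p * c := by
      rw [← rpow_mul hc.le, ← rpow_add_one hc.ne']
      congr 1
      rw [hp]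
      field_simp
      ring
    simp only [K]
    rw [rpow_sub_one hc.ne', hpow]
    field_simp
    ring
  refine AntitoneOn.concaveOn_of_deriv (convex_Ioi 0)
    (fun c hc => (hderiv c hc).continuousAt.continuousWithinAt) ?_ ?_ <;> rw [interior_Ioi]
  · exact fun c hc => (hderiv c hc).differentiableAt.differentiableWithinAt
  intro c (hc : 0 < c) d (hd : 0 < d) hcd
  rw [(hderiv c hc).deriv, (hderiv d hd).deriv]
  exact mul_le_mul_of_nonneg_left (antitoneOn_bregman_div_rpow hq hρ hτ (rpow_pos_of_pos hc p)
    (rpow_pos_of_pos hd p) (rpow_le_rpow hc.le hcd hp0.le)) hp0.le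

theorem sum_mul_rpow_le_add_powSlope {ι : Type*} (s : Finset ι) {w f : ι → ℝ} (hq : 2 ≤ q)
    (hρ : 0 < ρ) (hτ : 0 < τ) (hw : ∀ i ∈ s, 0 ≤ w i) (hw1 : ∑ i ∈ s, w i = 1)
    (hf : ∀ i ∈ s, 0 ≤ f i) (hwf : ∑ i ∈ s, w i * f i = 1) :
    ∑ i ∈ s, w i * (ρ * f i + τ) ^ q
      ≤ τ ^ q + powSlope q ρ τ ((∑ i ∈ s, w i * f i ^ q) ^ (q - 1)⁻¹) := by
  have hq0 : q - 1 ≠ 0 := by linarith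
  -- Jensen for the concave `c ↦ powSlope (c ^ (q - 1)⁻¹)`, with weights `w i * f i` at the
  -- points `f i ^ (q - 1)`.
  set t := s.filter (fun i => 0 < f i)
  have hpos : ∀ i ∈ s, f i ≠ 0 → 0 < f i := fun i hi h => (hf i hi).lt_of_ne' h
  have hexpand : ∑ i ∈ s, w i * (ρ * f i + τ) ^ q
      = τ ^ q + ∑ i ∈ t, (w i * f i) • powSlope q ρ τ ((f i ^ (q - 1)) ^ (q - 1)⁻¹) := by
    simp only [rpow_eq_add_mul_powSlope q ρ τ, mul_add, sum_add_distrib, ← sum_mul, hw1, one_mul]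
    congr 1
    rw [sum_filter_of_ne fun i hi h => hpos i hi (by rintro h0; simp [h0] at h)]
    refine sum_congr rfl fun i hi => ?_
    rw [rpow_rpow_inv (hf i hi) hq0, smul_eq_mul, mul_assoc]
  have hwt : ∑ i ∈ t, w i * f i = 1 := by
    rw [sum_filter_of_ne fun i hi h => hpos i hi (by rintro h0; simp [h0] at h), hwf]
  have hmean : ∑ i ∈ t, (w i * f i) • f i ^ (q - 1) = ∑ i ∈ s, w i * f i ^ q := by
    rw [← sum_filter_of_ne (p := fun i => 0 < f i)
      fun i hi h => hpos i hi (by rintro h0; simp [h0, zero_rpow (by linarith : q ≠ 0)] at h)]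
    refine sum_congr rfl fun i hi => ?_
    have hfi : 0 < f i := (mem_filter.1 hi).2
    rw [smul_eq_mul, mul_assoc, ← rpow_one_add' hfi.le (by linarith)]
    ring_nf
  rw [hexpand, ← hmean]
  exact add_le_add le_rfl ((concaveOn_powSlope_comp_rpow hq hρ hτ).le_map_sum
    (fun i hi => mul_nonneg (hw i (mem_filter.1 hi).1) (hf i (mem_filter.1 hi).1)) hwt
    (fun i hi => rpow_pos_of_pos (mem_filter.1 hi).2 _))

theorem strictConvexOn_log_add_powSlope_exp (hq : 1 < q) (hρ : 0 < ρ) (hτ : 0 < τ) :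
    StrictConvexOn ℝ univ (fun u => log (τ ^ q + powSlope q ρ τ (exp u))) := by
  have hD : ∀ u, 0 < ρ * exp u := fun u => mul_pos hρ (exp_pos u)
  have hσ : ∀ u, 0 < ρ * exp u + τ := fun u => by linarith [hD u]
  have hgap : ∀ u, 0 < (ρ * exp u + τ) ^ q - τ ^ q := fun u =>
    sub_pos.2 (rpow_lt_rpow hτ.le (by linarith [hD u]) (by linarith))
  -- `W` adds the log-linear `τ ^ q * e^u` to a strictly log-convex term.
  set W := fun u => τ ^ q * exp u + ((ρ * exp u + τ) ^ q - τ ^ q)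
  have hW : ∀ u, 0 < W u := fun u => by have := hgap u; positivity
  have hsplit : (fun u => log (τ ^ q + powSlope q ρ τ (exp u))) = (fun u => log (W u)) + -id := by
    funext u
    show log (τ ^ q + ((ρ * exp u + τ) ^ q - τ ^ q) / exp u) = log (W u) - u
    rw [show τ ^ q + ((ρ * exp u + τ) ^ q - τ ^ q) / exp u = W u / exp u by field_simp; rfl,
      log_div (hW u).ne' (exp_pos u).ne', log_exp]
  rw [hsplit]
  refine (strictConvexOn_univ_log_of_sq_deriv_lt hW
    (W' := fun u => τ ^ q * exp u + ρ * exp u * q * (ρ * exp u + τ) ^ (q - 1))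
    (W'' := fun u => τ ^ q * exp u + (ρ * exp u * q * (ρ * exp u + τ) ^ (q - 1)
      + ρ * exp u * q * (ρ * exp u * (q - 1) * (ρ * exp u + τ) ^ (q - 2)))) (fun u => ?_)
    (fun u => ?_) (fun u => ?_)).add_convexOn (concaveOn_id convex_univ).neg
  · exact ((hasDerivAt_exp u).const_mul _).add
      ((hasDerivAt_rpow_mul_exp_add (hσ u)).sub_const _)
  · have h := (((hasDerivAt_exp u).const_mul ρ).mul_const q).mul
      (hasDerivAt_rpow_mul_exp_add (r := q - 1) (hσ u))
    rw [show q - 1 - 1 = q - 2 by ring] at h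
    exact ((hasDerivAt_exp u).const_mul _).add h
  · exact add_sq_lt_add_mul_add (by positivity) (hgap u) (sq_mul_rpow_sub_one_lt (hD u) hτ hq)

end powSlope

noncomputable def mixProfile (q ρ u : ℝ) : ℝ := log ((1 - ρ) ^ q + powSlope q ρ (1 - ρ) (exp u))

section mixProfile

variable {q ρ : ℝ}

theorem mixProfile_zero : mixProfile q ρ 0 = 0 := by
  simp [mixProfile, powSlope]

theorem mixProfile_log_one_div {m : ℝ} (hm : 0 < m) : mixProfile q ρ (log (1 / m))
    = log (m * (1 + ρ * (1 / m - 1)) ^ q + (1 - m) * (1 - ρ) ^ q) := by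
  rw [mixProfile, exp_log (one_div_pos.2 hm), powSlope,
    show ρ * (1 / m) + (1 - ρ) = 1 + ρ * (1 / m - 1) by ring]
  congr 1
  field_simp
  ring

theorem mixProfile_le_div_mul (hq : 1 < q) (hρ0 : 0 < ρ) (hρ1 : ρ < 1) {L u : ℝ}
    (hu : u ∈ Icc 0 L) : mixProfile q ρ u ≤ mixProfile q ρ L / L * u :=
  ((strictConvexOn_log_add_powSlope_exp hq hρ0 (by linarith)).subset (subset_univ _)
    (convex_Icc 0 L)).convexOn.le_div_mul_of_mem_Icc mixProfile_zero hu

theorem mixProfile_lt_div_mul (hq : 1 < q) (hρ0 : 0 < ρ) (hρ1 : ρ < 1) {L u : ℝ}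
    (hu : u ∈ Ioo 0 L) : mixProfile q ρ u < mixProfile q ρ L / L * u :=
  ((strictConvexOn_log_add_powSlope_exp hq hρ0 (by linarith)).subset (subset_univ _)
    (convex_Icc 0 L)).lt_div_mul_of_mem_Ioo mixProfile_zero hu

end mixProfile

section Renyi

variable {Ω : Type*} [Fintype Ω] {μ ν : Ω → ℝ} {q : ℝ}

theorem sum_rpow_div_rpow_eq_sum_mul (hμ : ∀ x, 0 < μ x) (hν : ∀ x, 0 ≤ ν x) :
    ∑ x, ν x ^ q / μ x ^ (q - 1) = ∑ x, μ x * (ν x / μ x) ^ q :=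
  sum_congr rfl fun x _ => rpow_div_rpow_sub_one_eq_mul_div_rpow (hμ x) (hν x)

theorem sum_mul_div_eq_sum (hμ : ∀ x, 0 < μ x) : ∑ x, μ x * (ν x / μ x) = ∑ x, ν x :=
  sum_congr rfl fun x _ => mul_div_cancel₀ _ (hμ x).ne'

theorem one_le_sum_rpow_div_rpow (hq : 1 ≤ q) (hμ : ∀ x, 0 < μ x) (hμ1 : ∑ x, μ x = 1)
    (hν : ∀ x, 0 ≤ ν x) (hν1 : ∑ x, ν x = 1) : 1 ≤ ∑ x, ν x ^ q / μ x ^ (q - 1) := by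
  have h := rpow_arith_mean_le_arith_mean_rpow univ μ (fun x => ν x / μ x)
    (fun x _ => (hμ x).le) hμ1 (fun x _ => div_nonneg (hν x) (hμ x).le) hq
  rwa [sum_mul_div_eq_sum hμ, hν1, one_rpow, ← sum_rpow_div_rpow_eq_sum_mul hμ hν] at h

theorem sum_rpow_div_rpow_eq_one_iff (hq : 1 < q) (hμ : ∀ x, 0 < μ x) (hμ1 : ∑ x, μ x = 1)
    (hν : ∀ x, 0 ≤ ν x) (hν1 : ∑ x, ν x = 1) : ∑ x, ν x ^ q / μ x ^ (q - 1) = 1 ↔ ν = μ := by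
  have h := (strictConvexOn_rpow hq).map_sum_eq_iff (t := univ) (w := μ)
    (p := fun x => ν x / μ x) (fun x _ => hμ x) hμ1
    (fun x _ => mem_Ici.2 (div_nonneg (hν x) (hμ x).le))
  simp only [smul_eq_mul, sum_mul_div_eq_sum hμ, hν1, one_rpow] at h
  rw [sum_rpow_div_rpow_eq_sum_mul hμ hν, eq_comm, h, funext_iff]
  exact ⟨fun H x => (div_eq_one_iff_eq (hμ x).ne').1 (H x (mem_univ x)),
    fun H x _ => (div_eq_one_iff_eq (hμ x).ne').2 (H x)⟩

theorem sum_rpow_div_rpow_le {s : ℝ} (hq : 1 < q) (hs : 0 < s) (hsμ : ∀ x, s ≤ μ x)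
    (hν : ∀ x, 0 ≤ ν x) (hν1 : ∑ x, ν x = 1) :
    ∑ x, ν x ^ q / μ x ^ (q - 1) ≤ (1 / s) ^ (q - 1) :=
  calc ∑ x, ν x ^ q / μ x ^ (q - 1) ≤ ∑ x, ν x * (1 / s) ^ (q - 1) :=
        sum_le_sum fun x _ => rpow_div_rpow_sub_one_le hs (hsμ x) (hν x)
          (hν1 ▸ single_le_sum (fun y _ => hν y) (mem_univ x)) hq
    _ = (1 / s) ^ (q - 1) := by rw [← sum_mul, hν1, one_mul]

theorem exists_eq_ite_of_sum_rpow_div_rpow_eq {s : ℝ} (hq : 1 < q) (hs : 0 < s)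
    (hsμ : ∀ x, s ≤ μ x) (hν : ∀ x, 0 ≤ ν x) (hν1 : ∑ x, ν x = 1)
    (h : ∑ x, ν x ^ q / μ x ^ (q - 1) = (1 / s) ^ (q - 1)) :
    ∃ xs, μ xs = s ∧ ∀ y, ν y = if y = xs then 1 else 0 := by
  have hν1' : ∀ x, ν x ≤ 1 := fun x => hν1 ▸ single_le_sum (fun y _ => hν y) (mem_univ x)
  obtain ⟨xs, -, hxs⟩ := exists_lt_of_sum_lt (by simp [hν1] : ∑ x : Ω, (0 : ℝ) < ∑ x, ν x)
  have hμxs : 0 < μ xs := hs.trans_le (hsμ xs)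
  have hratio : ν xs / μ xs = 1 / s := by
    refine (div_le_div₀ zero_le_one (hν1' xs) hs (hsμ xs)).eq_of_not_lt fun hlt => h.not_lt ?_
    calc ∑ x, ν x ^ q / μ x ^ (q - 1) < ∑ x, ν x * (1 / s) ^ (q - 1) :=
          sum_lt_sum (fun x _ => rpow_div_rpow_sub_one_le hs (hsμ x) (hν x) (hν1' x) hq)
            ⟨xs, mem_univ xs, rpow_div_rpow_sub_one_lt hμxs hxs hlt hq⟩
      _ = (1 / s) ^ (q - 1) := by rw [← sum_mul, hν1, one_mul]
  rw [div_eq_div_iff hμxs.ne' hs.ne', one_mul] at hratio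
  have hone : ν xs = 1 := by nlinarith [hν1' xs, hsμ xs]
  refine ⟨xs, by rw [← hratio, hone, one_mul], eq_ite_of_sum_eq_one hν hν1 hone⟩

theorem renyiDiv_nonneg (hq : 1 < q) (hμ : ∀ x, 0 < μ x) (hμ1 : ∑ x, μ x = 1)
    (hν : ∀ x, 0 ≤ ν x) (hν1 : ∑ x, ν x = 1) : 0 ≤ renyiDiv q ν μ :=
  mul_nonneg (one_div_nonneg.2 (by linarith))
    (log_nonneg (one_le_sum_rpow_div_rpow hq.le hμ hμ1 hν hν1))

theorem renyiDiv_eq_zero_iff (hq : 1 < q) (hμ : ∀ x, 0 < μ x) (hμ1 : ∑ x, μ x = 1)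
    (hν : ∀ x, 0 ≤ ν x) (hν1 : ∑ x, ν x = 1) : renyiDiv q ν μ = 0 ↔ ν = μ := by
  have hB := one_le_sum_rpow_div_rpow hq.le hμ hμ1 hν hν1
  rw [← sum_rpow_div_rpow_eq_one_iff hq hμ hμ1 hν hν1, renyiDiv,
    mul_eq_zero_iff_left (one_div_ne_zero (by linarith))]
  exact ⟨eq_one_of_pos_of_log_eq_zero (by linarith), fun h => by rw [h, log_one]⟩

theorem renyiDiv_le_log_one_div {s : ℝ} (hq : 1 < q) (hs : 0 < s) (hsμ : ∀ x, s ≤ μ x)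
    (hμ : ∀ x, 0 < μ x) (hμ1 : ∑ x, μ x = 1) (hν : ∀ x, 0 ≤ ν x) (hν1 : ∑ x, ν x = 1) :
    renyiDiv q ν μ ≤ log (1 / s) := by
  have hB := one_le_sum_rpow_div_rpow hq.le hμ hμ1 hν hν1
  calc renyiDiv q ν μ ≤ 1 / (q - 1) * log ((1 / s) ^ (q - 1)) := by
        exact mul_le_mul_of_nonneg_left (log_le_log (by linarith)
          (sum_rpow_div_rpow_le hq hs hsμ hν hν1)) (one_div_nonneg.2 (by linarith))
    _ = log (1 / s) := by
        rw [log_rpow (by positivity)]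
        field_simp [(sub_pos.2 hq).ne']

theorem exists_eq_ite_of_renyiDiv_eq_log_one_div {s : ℝ} (hq : 1 < q) (hs : 0 < s)
    (hsμ : ∀ x, s ≤ μ x) (hμ : ∀ x, 0 < μ x) (hμ1 : ∑ x, μ x = 1) (hν : ∀ x, 0 ≤ ν x)
    (hν1 : ∑ x, ν x = 1)
    (h : renyiDiv q ν μ = log (1 / s)) : ∃ xs, μ xs = s ∧ ∀ y, ν y = if y = xs then 1 else 0 := by
  have hB := one_le_sum_rpow_div_rpow hq.le hμ hμ1 hν hν1
  refine exists_eq_ite_of_sum_rpow_div_rpow_eq hq hs hsμ hν hν1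
    (log_injOn_pos (mem_Ioi.2 (by linarith)) (mem_Ioi.2 (by positivity)) ?_)
  rw [log_rpow (by positivity), ← h, renyiDiv]
  field_simp [(sub_pos.2 hq).ne']

theorem renyiDiv_ite (hq : 1 < q) {xs : Ω} (hμ : 0 < μ xs) :
    renyiDiv q (fun y => if y = xs then 1 else 0) μ = log (1 / μ xs) := by
  rw [renyiDiv, sum_eq_single xs (fun y _ hy => by simp [hy, zero_rpow (by linarith : q ≠ 0)])
    (by simp), if_pos rfl, one_rpow,
    show 1 / μ xs ^ (q - 1) = (1 / μ xs) ^ (q - 1) by rw [div_rpow zero_le_one hμ.le, one_rpow],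
    log_rpow (by positivity)]
  field_simp [(sub_pos.2 hq).ne']

theorem sum_mix_rpow_div_rpow_eq {ρ : ℝ} (hρ0 : 0 ≤ ρ) (hρ1 : ρ ≤ 1) (hμ : ∀ x, 0 < μ x)
    (hν : ∀ x, 0 ≤ ν x) : ∑ x, (ρ * ν x + (1 - ρ) * μ x) ^ q / μ x ^ (q - 1)
      = ∑ x, μ x * (ρ * (ν x / μ x) + (1 - ρ)) ^ q := by
  rw [sum_rpow_div_rpow_eq_sum_mul hμ fun x => by have := hν x; have := hμ x; positivity]
  congr 1 with x
  field_simp [(hμ x).ne']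

theorem renyiDiv_mix_ite {ρ : ℝ} (hρ0 : 0 ≤ ρ) (hρ1 : ρ ≤ 1) (hμ : ∀ x, 0 < μ x)
    (hμ1 : ∑ x, μ x = 1) (xs : Ω) :
    renyiDiv q (fun x => ρ * (if x = xs then 1 else 0) + (1 - ρ) * μ x) μ
      = 1 / (q - 1) * mixProfile q ρ (log (1 / μ xs)) := by
  rw [renyiDiv, sum_mix_rpow_div_rpow_eq hρ0 hρ1 hμ fun x => by positivity, mixProfile,
    exp_log (one_div_pos.2 (hμ xs))]
  simp only [rpow_eq_add_mul_powSlope q ρ (1 - ρ), mul_add, sum_add_distrib, ← sum_mul, hμ1,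
    one_mul]
  rw [sum_eq_single xs (fun y _ hy => by simp [hy]) (by simp), if_pos rfl,
    ← mul_assoc, mul_one_div_cancel (hμ xs).ne', one_mul]

theorem renyiDiv_mix_le {ρ : ℝ} (hq : 2 ≤ q) (hρ0 : 0 < ρ) (hρ1 : ρ < 1) (hμ : ∀ x, 0 < μ x)
    (hμ1 : ∑ x, μ x = 1) (hν : ∀ x, 0 ≤ ν x) (hν1 : ∑ x, ν x = 1) :
    renyiDiv q (fun x => ρ * ν x + (1 - ρ) * μ x) μ
      ≤ 1 / (q - 1) * mixProfile q ρ (renyiDiv q ν μ) := by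
  have hB := one_le_sum_rpow_div_rpow (q := q) (by linarith) hμ hμ1 hν hν1
  have hmix : ∀ x, 0 ≤ ρ * ν x + (1 - ρ) * μ x := fun x => by
    have := hν x; have := hμ x; nlinarith
  have hA := one_le_sum_rpow_div_rpow (q := q) (by linarith) hμ hμ1 hmix (by
    rw [sum_add_distrib, ← mul_sum, ← mul_sum, hν1, hμ1]; ring)
  rw [sum_mix_rpow_div_rpow_eq hρ0.le hρ1.le hμ hν] at hA
  have hexp : exp (renyiDiv q ν μ) = (∑ x, μ x * (ν x / μ x) ^ q) ^ (q - 1)⁻¹ := by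
    rw [← sum_rpow_div_rpow_eq_sum_mul hμ hν, rpow_def_of_pos (by linarith), renyiDiv,
      one_div, mul_comm]
  rw [mixProfile, hexp, renyiDiv, sum_mix_rpow_div_rpow_eq hρ0.le hρ1.le hμ hν]
  refine mul_le_mul_of_nonneg_left (log_le_log (by linarith) ?_) (one_div_nonneg.2 (by linarith))
  exact sum_mul_rpow_le_add_powSlope univ hq hρ0 (by linarith) (fun x _ => (hμ x).le) hμ1
    (fun x _ => div_nonneg (hν x) (hμ x).le) ((sum_mul_div_eq_sum hμ).trans hν1)

end Renyi

theorem stmt7 {Ω : Type*} [Fintype Ω] (hΩ : 2 ≤ Fintype.card Ω)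
    (μ : Ω → ℝ) (hμpos : ∀ x, 0 < μ x) (hμsum : ∑ x, μ x = 1)
    (μs : ℝ) (hμs_le : ∀ x, μs ≤ μ x) (hμs_mem : ∃ x, μ x = μs)
    (q ρ lam : ℝ) (hq : 2 ≤ q) (hρ0 : 0 < ρ) (hρ1 : ρ < 1)
    (hlam : lam = Real.log (μs * (1 + ρ * (1 / μs - 1)) ^ q + (1 - μs) * (1 - ρ) ^ q) /
      ((q - 1) * Real.log (1 / μs)))
    (ν : Ω → ℝ) (hνpos : ∀ x, 0 ≤ ν x) (hνsum : ∑ x, ν x = 1) :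
    renyiDiv q (fun x => ρ * ν x + (1 - ρ) * μ x) μ ≤ lam * renyiDiv q ν μ ∧
      (renyiDiv q (fun x => ρ * ν x + (1 - ρ) * μ x) μ = lam * renyiDiv q ν μ ↔
        ν = μ ∨ ∃ xs, μ xs = μs ∧ ∀ y, ν y = if y = xs then 1 else 0) := by
  have hq1 : 1 < q := by linarith
  obtain ⟨x₀, rfl⟩ := hμs_mem
  have hL : 0 < log (1 / μ x₀) :=
    log_pos (one_lt_one_div (hμpos x₀) (lt_one_of_two_le_card hΩ hμpos hμsum x₀))
  have hlam' : ∀ D, lam * D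
      = 1 / (q - 1) * (mixProfile q ρ (log (1 / μ x₀)) / log (1 / μ x₀) * D) := fun D => by
    rw [hlam, mixProfile_log_one_div (hμpos x₀)]
    field_simp
  have hD0 := renyiDiv_nonneg hq1 hμpos hμsum hνpos hνsum
  have hDL := renyiDiv_le_log_one_div hq1 (hμpos x₀) hμs_le hμpos hμsum hνpos hνsum
  have hmix := renyiDiv_mix_le hq hρ0 hρ1 hμpos hμsum hνpos hνsum
  have hq1' : 0 < 1 / (q - 1) := one_div_pos.2 (sub_pos.2 hq1)
  refine ⟨hmix.trans ?_, fun heq => ?_, ?_⟩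
  · rw [hlam']
    exact mul_le_mul_of_nonneg_left (mixProfile_le_div_mul hq1 hρ0 hρ1 ⟨hD0, hDL⟩) hq1'.le
  · rcases hD0.eq_or_lt with h0 | h0
    · exact Or.inl ((renyiDiv_eq_zero_iff hq1 hμpos hμsum hνpos hνsum).1 h0.symm)
    rcases hDL.eq_or_lt with hDL | hDL
    · exact Or.inr (exists_eq_ite_of_renyiDiv_eq_log_one_div hq1 (hμpos x₀) hμs_le hμpos hμsum
        hνpos hνsum hDL)
    · have := mul_lt_mul_of_pos_left (mixProfile_lt_div_mul hq1 hρ0 hρ1 ⟨h0, hDL⟩) hq1'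
      linarith [hlam' (renyiDiv q ν μ)]
  · rintro (rfl | ⟨xs, hxs, hν⟩)
    · rw [show (fun x => ρ * ν x + (1 - ρ) * ν x) = ν by funext x; ring,
        (renyiDiv_eq_zero_iff hq1 hμpos hμsum hνpos hνsum).2 rfl, mul_zero]
    · obtain rfl : ν = fun y => if y = xs then 1 else 0 := funext hν
      rw [renyiDiv_mix_ite hρ0.le hρ1.le hμpos hμsum xs, renyiDiv_ite hq1 (hμpos xs), hxs, hlam']
      field_simp
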